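/- arXiv:2308.07782 — 3 statements merged into one kernel-verified Lean document; each statement's English description precedes it below -/
import Mathlib

section
/- Let G be a group, f : G → G a group automorphism, and equip G with the operation x ∗ y := f(x y⁻¹) · y. Then for every positive integer j, the following are equivalent: (S_y^j(x) = x for all x, y ∈ G) and (f^j is the identity automorphism of G), where S_y(x) = x ∗ y. -/
/-! `S_y` is `f` conjugated by right translation by `y`, so `S_y^j (x) = f^j (x y⁻¹) y`.
Taking `y = 1` recovers `f^j`, and conversely `f^j = 1` makes every `S_y^j` the identity. -/

lemma iterate_map_mul_inv_mul {G : Type*} [Group G] (f : MulAut G) (n : ℕ) (x y : G) :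
    (fun x : G => f (x * y⁻¹) * y)^[n] x = (f ^ n) (x * y⁻¹) * y := by
  induction n with
  | zero => simp
  | succ n ih =>
    rw [Function.iterate_succ_apply', ih, pow_succ', MulAut.mul_apply, mul_inv_cancel_right]

theorem galex_iterate_eq_self_iff_general {G : Type*} [Group G] (f : MulAut G) (j : ℕ) :
    (∀ x y : G, (fun x : G => f (x * y⁻¹) * y)^[j] x = x) ↔ f ^ j = 1 := by
  simp_rw [iterate_map_mul_inv_mul]
  constructor
  · intro h
    ext g
    simpa using h g 1
  · intro h x y
    simp [h]

/-- For `GAlex(G, f)` with operation `x ∗ y := f (x * y⁻¹) * y` and any positive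
integer `j`: `S_y^j (x) = x` for all `x, y ∈ G` iff `f^j` is the identity automorphism. -/
theorem galex_iterate_eq_self_iff {G : Type*} [Group G] (f : MulAut G) (j : ℕ)
    (hj : 0 < j) :
    (∀ x y : G, (fun x : G => f (x * y⁻¹) * y)^[j] x = x) ↔ f ^ j = 1 :=
  galex_iterate_eq_self_iff_general f j
end

section
/- Let G be a group and f : G → G a group automorphism of finite order, and equip G with the operation x ∗ y := f(x y⁻¹) · y. Then the least positive integer n such that S_y^n(x) = x for all x, y ∈ G exists and equals the order of f; that is, the type of the generalized Alexander quandle GAlex(G, f) equals order(f). -/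
/-! `S_y` is `f` conjugated by the right translation `x ↦ x * y`, so `S_y^n x = f^n (x y⁻¹) y`;
hence `S_y^n = id` for every `y` exactly when `f^n = 1` (take `y = 1` for the converse). -/

lemma iterate_galex_apply {G : Type*} [Group G] (f : MulAut G) (y : G) (n : ℕ) (x : G) :
    (fun x : G => f (x * y⁻¹) * y)^[n] x = (f ^ n) (x * y⁻¹) * y := by
  induction n with
  | zero => simp
  | succ n ih =>
    rw [Function.iterate_succ_apply', ih, pow_succ']
    simp

lemma iterate_galex_eq_self_iff {G : Type*} [Group G] (f : MulAut G) (n : ℕ) :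
    (∀ x y : G, (fun x : G => f (x * y⁻¹) * y)^[n] x = x) ↔ f ^ n = 1 := by
  simp only [iterate_galex_apply]
  constructor
  · intro h
    ext x
    simpa using h x 1
  · intro h x y
    simp [h]

/-- If `f` is a group automorphism of finite order, then the least positive integer `n`
with `S_y^n (x) = x` for all `x, y ∈ G` (where `x ∗ y := f (x * y⁻¹) * y`) exists and
equals the order of `f`; i.e. the type of `GAlex(G, f)` equals `order f`. -/
theorem type_galex_eq_orderOf {G : Type*} [Group G] (f : MulAut G)
    (hf : IsOfFinOrder f) :
    IsLeast {n : ℕ | 0 < n ∧ ∀ x y : G, (fun x : G => f (x * y⁻¹) * y)^[n] x = x}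
      (orderOf f) :=
  ⟨⟨hf.orderOf_pos, (iterate_galex_eq_self_iff f _).2 (pow_orderOf_eq_one f)⟩,
    fun _ ⟨hn, h⟩ => orderOf_le_of_pow_eq_one hn ((iterate_galex_eq_self_iff f _).1 h)⟩
end

section
/- Let G and H be groups with group automorphisms f : G → G and g : H → H, and equip G and H with the operations x ∗ y := f(x y⁻¹) · y and u ∗ v := g(u v⁻¹) · v, respectively. If there exists a bijection φ : G → H with φ(x ∗ y) = φ(x) ∗ φ(y) for all x, y ∈ G (i.e., the generalized Alexander quandles GAlex(G, f) and GAlex(H, g) are quandle isomorphic), then for every positive integer n, f^n = id if and only if g^n = id; in particular, f and g have the same order. -/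
/-!
Evaluating the quandle law at `y = 1` shows that `x ↦ φ x * (φ 1)⁻¹` is a bijection conjugating
`f` to `g`, so `f ^ n` and `g ^ n` are conjugate as permutations and one is the identity
exactly when the other is.
-/

open Function

theorem MulAut.coe_pow {M : Type*} [Mul M] (f : MulAut M) (n : ℕ) : ⇑(f ^ n) = (⇑f)^[n] :=
  hom_coe_pow _ (MulAut.coe_one M) (MulAut.coe_mul M) f n

theorem Function.Semiconj.eq_id_iff {α β : Type*} {ψ : α → β} (hψ : Bijective ψ)
    {fa : α → α} {gb : β → β} (h : Semiconj ψ fa gb) : fa = id ↔ gb = id := by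
  constructor
  · rintro rfl
    funext b
    obtain ⟨a, rfl⟩ := hψ.2 b
    exact (h a).symm
  · intro hg
    funext a
    exact hψ.1 ((h a).trans (congrFun hg _))

theorem MulAut.pow_eq_one_iff_of_semiconj {G H : Type*} [Group G] [Group H]
    {f : MulAut G} {g : MulAut H} {ψ : G → H} (hψ : Bijective ψ) (h : Semiconj ψ f g) (n : ℕ) :
    f ^ n = 1 ↔ g ^ n = 1 := by
  simpa only [DFunLike.ext'_iff, MulAut.coe_one, MulAut.coe_pow] using
    (h.iterate_right n).eq_id_iff hψ

theorem semiconj_mul_inv_apply_one_of_galex_hom {G H : Type*} [Group G] [Group H]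
    {f : MulAut G} {g : MulAut H} {φ : G → H}
    (hhom : ∀ x y : G, φ (f (x * y⁻¹) * y) = g (φ x * (φ y)⁻¹) * φ y) :
    Semiconj (fun x => φ x * (φ 1)⁻¹) f g := by
  intro x
  have hx := hhom x 1
  simp only [inv_one, mul_one] at hx
  simp only [hx, mul_inv_cancel_right]

/-- If the generalized Alexander quandles `GAlex(G, f)` and `GAlex(H, g)` (with
operations `x ∗ y := f (x * y⁻¹) * y` and `u ∗ v := g (u * v⁻¹) * v`) are quandle
isomorphic, then for every positive integer `n`, `f^n = id` iff `g^n = id`; in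
particular `f` and `g` have the same order (with order `0` when infinite). -/
theorem galex_iso_orderOf_eq {G H : Type*} [Group G] [Group H]
    (f : MulAut G) (g : MulAut H) (φ : G → H) (hφ : Function.Bijective φ)
    (hhom : ∀ x y : G, φ (f (x * y⁻¹) * y) = g (φ x * (φ y)⁻¹) * φ y) :
    (∀ n : ℕ, 0 < n → (f ^ n = 1 ↔ g ^ n = 1)) ∧ orderOf f = orderOf g := by
  have hψ : Bijective (fun x => φ x * (φ 1)⁻¹) :=
    (Group.mulRight_bijective (φ 1)⁻¹).comp hφ
  have hpow := MulAut.pow_eq_one_iff_of_semiconj hψ (semiconj_mul_inv_apply_one_of_galex_hom hhom)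
  exact ⟨fun n _ => hpow n, orderOf_eq_orderOf_iff.mpr hpow⟩
end
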